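/- arXiv:1107.5282 — 2 statements merged into one kernel-verified Lean document; each statement's English description precedes it below -/
import Mathlib

section
/- Let V be an inner product space over ℂ, let U be a positive integer, let f : ℕ → V, and let g : ℕ → ℝ be such that g(d) > 0 for every divisor d of U and ⟨f_u, f_v⟩ = ∑_{d ∣ gcd(u,v)} g(d) for all divisors u, v of U. For a divisor u of U define f'_u = ∑_{j ∣ u} μ(u/j)·f_j, where μ is the Möbius function. Then for all divisors u, v of U one has ⟨f'_u, f'_v⟩ = g(u) if u = v and ⟨f'_u, f'_v⟩ = 0 if u ≠ v; in particular the family {f'_u : u ∣ U} consists of pairwise orthogonal nonzero vectors and is linearly independent. -/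
/-!
The Gram matrix of `f` on the divisors of `U` factors as `Z G Zᵀ`, where `G = diag g` and
`Z i d = [d ∣ i]` is the divisibility (zeta) matrix. The Möbius coefficients of `f'` invert `Z`:
`∑_{i ∣ u, d ∣ i} μ(u / i) = [u = d]` is Möbius inversion of `n ↦ [d ∣ n] = ∑_{i ∣ n} [i = d]`.
Hence the Gram matrix of `f'` is `G` itself.
-/

open scoped InnerProductSpace
open ArithmeticFunction
open scoped ArithmeticFunction.Moebius
open Finset

theorem sum_divisors_moebius_mul_ite_dvd {R : Type*} [Ring R] {u : ℕ} (hu : 0 < u) (d : ℕ) :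
    ∑ i ∈ u.divisors, (μ (u / i) : R) * (if d ∣ i then 1 else 0) = if u = d then 1 else 0 := by
  have hζ : ∀ n > 0, ∑ i ∈ n.divisors, (if i = d then 1 else 0 : R) = if d ∣ n then 1 else 0 :=
    fun n hn ↦ by simp [sum_ite_eq', hn.ne']
  rw [← Nat.sum_divisorsAntidiagonal' (fun a b ↦ (μ a : R) * if d ∣ b then 1 else 0)]
  exact sum_eq_iff_sum_mul_moebius_eq.mp hζ u hu

theorem Nat.divisors_gcd_eq_filter {U i j : ℕ} (hU : U ≠ 0) (hi : i ∣ U) :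
    (i.gcd j).divisors = {d ∈ U.divisors | d ∣ i ∧ d ∣ j} := by
  rw [← Nat.divisors_filter_dvd_of_dvd hU ((Nat.gcd_dvd_left i j).trans hi)]
  simp only [Nat.dvd_gcd_iff]

theorem inner_sum_smul_sum_smul_of_inner_eq_sum {𝕜 V ι κ : Type*} [RCLike 𝕜]
    [NormedAddCommGroup V] [InnerProductSpace 𝕜 V] {s t : Finset ι} {D : Finset κ}
    {f : ι → V} {z : κ → ι → 𝕜} {w : κ → 𝕜}
    (hf : ∀ i ∈ s, ∀ j ∈ t, ⟪f i, f j⟫_𝕜 = ∑ d ∈ D, (starRingEnd 𝕜) (z d i) * z d j * w d)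
    (a b : ι → 𝕜) :
    ⟪∑ i ∈ s, a i • f i, ∑ j ∈ t, b j • f j⟫_𝕜 =
      ∑ d ∈ D, (starRingEnd 𝕜) (∑ i ∈ s, a i * z d i) * (∑ j ∈ t, b j * z d j) * w d := by
  calc ⟪∑ i ∈ s, a i • f i, ∑ j ∈ t, b j • f j⟫_𝕜
      = ∑ i ∈ s, ∑ j ∈ t, ∑ d ∈ D,
          (starRingEnd 𝕜) (a i * z d i) * (b j * z d j) * w d := by
        rw [sum_inner]
        refine sum_congr rfl fun i hi ↦ ?_
        rw [inner_smul_left, inner_sum, mul_sum]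
        refine sum_congr rfl fun j hj ↦ ?_
        rw [inner_smul_right, hf i hi j hj, mul_sum, mul_sum]
        refine sum_congr rfl fun d _ ↦ ?_
        rw [map_mul]
        ring
    _ = ∑ d ∈ D, ∑ i ∈ s, ∑ j ∈ t,
          (starRingEnd 𝕜) (a i * z d i) * (b j * z d j) * w d := by
        rw [sum_congr rfl fun i _ ↦ sum_comm, sum_comm]
    _ = _ := by
        refine sum_congr rfl fun d _ ↦ ?_
        rw [map_sum, sum_mul_sum, sum_mul]
        simp only [sum_mul]

theorem inner_sum_moebius_smul_sum_moebius_smul {𝕜 V : Type*} [RCLike 𝕜]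
    [NormedAddCommGroup V] [InnerProductSpace 𝕜 V] {U : ℕ} (hU : U ≠ 0) {f : ℕ → V}
    {g : ℕ → 𝕜}
    (hfg : ∀ i j : ℕ, i ∣ U → j ∣ U → ⟪f i, f j⟫_𝕜 = ∑ d ∈ (i.gcd j).divisors, g d)
    {u v : ℕ} (hu : u ∣ U) (hv : v ∣ U) :
    ⟪∑ i ∈ u.divisors, ((μ (u / i) : ℤ) : 𝕜) • f i,
        ∑ j ∈ v.divisors, ((μ (v / j) : ℤ) : 𝕜) • f j⟫_𝕜 = if u = v then g u else 0 := by
  let z : ℕ → ℕ → 𝕜 := fun d i ↦ if d ∣ i then 1 else 0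
  have hgram : ∀ i ∈ u.divisors, ∀ j ∈ v.divisors,
      ⟪f i, f j⟫_𝕜 = ∑ d ∈ U.divisors, (starRingEnd 𝕜) (z d i) * z d j * g d := by
    intro i hi j hj
    have hiU : i ∣ U := (Nat.dvd_of_mem_divisors hi).trans hu
    rw [hfg i j hiU ((Nat.dvd_of_mem_divisors hj).trans hv),
      Nat.divisors_gcd_eq_filter hU hiU, sum_filter]
    refine sum_congr rfl fun d _ ↦ ?_
    by_cases hdi : d ∣ i <;> by_cases hdj : d ∣ j <;> simp [z, hdi, hdj]
  have hUpos := Nat.pos_of_ne_zero hU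
  simp only [inner_sum_smul_sum_smul_of_inner_eq_sum hgram, z,
    sum_divisors_moebius_mul_ite_dvd (Nat.pos_of_dvd_of_pos hu hUpos),
    sum_divisors_moebius_mul_ite_dvd (Nat.pos_of_dvd_of_pos hv hUpos)]
  split_ifs with huv
  · subst huv
    simp [hu, hU]
  · simp [huv]

theorem moebius_orthogonalization
    (V : Type*) [NormedAddCommGroup V] [InnerProductSpace ℂ V]
    (U : ℕ) (hU : 0 < U) (f : ℕ → V) (g : ℕ → ℝ)
    (hg : ∀ d : ℕ, d ∣ U → 0 < g d)
    (hfg : ∀ u v : ℕ, u ∣ U → v ∣ U →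
      ⟪f u, f v⟫_ℂ = ∑ d ∈ (Nat.gcd u v).divisors, (g d : ℂ))
    (f' : ℕ → V)
    (hf' : ∀ u : ℕ, u ∣ U → f' u = ∑ j ∈ u.divisors, ((μ (u / j) : ℤ) : ℂ) • f j) :
    (∀ u v : ℕ, u ∣ U → v ∣ U →
        ⟪f' u, f' v⟫_ℂ = if u = v then (g u : ℂ) else 0) ∧
      (∀ u : ℕ, u ∣ U → f' u ≠ 0) ∧
      LinearIndependent ℂ (fun u : {u : ℕ // u ∣ U} => f' u.val) := by
  have horth : ∀ u v : ℕ, u ∣ U → v ∣ U →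
      ⟪f' u, f' v⟫_ℂ = if u = v then (g u : ℂ) else 0 := fun u v hu hv ↦ by
    rw [hf' u hu, hf' v hv]
    exact inner_sum_moebius_smul_sum_moebius_smul hU.ne' hfg hu hv
  have hne : ∀ u : ℕ, u ∣ U → f' u ≠ 0 := fun u hu h0 ↦ by
    have hgu := horth u u hu hu
    rw [h0, inner_zero_left, if_pos rfl] at hgu
    exact (hg u hu).ne (mod_cast hgu)
  refine ⟨horth, hne, linearIndependent_of_ne_zero_of_inner_eq_zero (fun u ↦ hne u u.2)
    fun u v huv ↦ ?_⟩
  simpa [Subtype.ext_iff.not.mp huv] using horth u v u.2 v.2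
end

section
/- Let ψ be a Dirichlet character (of any modulus), extended to ℤ in the usual completely multiplicative way, let q be a positive integer, and let z ∈ ℍ. Then ∑_{n ∈ ℤ} ψ(n)·c_q(n)·e(n²z) = ∑_{j ∣ q} μ(q/j)·j·ψ(j)·θ_ψ(j²z), where both series converge absolutely. -/
open Complex ArithmeticFunction
open scoped ArithmeticFunction.Moebius

/-- `e(z) = exp(2πiz)`. -/
noncomputable def eC (z : ℂ) : ℂ := Complex.exp (2 * Real.pi * Complex.I * z)

/-- Ramanujan's sum `c_q(n) = ∑_{d ∣ (q,n)} μ(q/d) d` for an integer `n`. -/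
def ramanujanSum (q : ℕ) (n : ℤ) : ℤ :=
  ∑ d ∈ (Nat.gcd q n.natAbs).divisors, (μ (q / d) : ℤ) * (d : ℤ)

/-- `θ_ψ(z) = ∑_{n ∈ ℤ} ψ(n) e(n² z)`. -/
noncomputable def thetaPsi {N : ℕ} (ψ : DirichletCharacter ℂ N) (z : ℂ) : ℂ :=
  ∑' n : ℤ, ψ ((n : ZMod N)) * eC ((n : ℂ) ^ 2 * z)

/-!
Expanding `c_q(n) = ∑_{d ∣ q, d ∣ n} μ(q/d) d` and exchanging this finite sum with the theta series,
which converges absolutely since `|c_q(n)| ≤ σ(q)`, leaves for each `d` the theta series restricted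
to the multiples `n = d m` of `d`; by complete multiplicativity of `ψ` it equals `ψ(d) θ_ψ(d² z)`.
-/

open scoped ArithmeticFunction.sigma

lemma eC_intCast_sq_mul (n : ℤ) (w : ℂ) :
    eC ((n : ℂ) ^ 2 * w) = jacobiTheta₂_term n 0 (2 * w) := by
  rw [eC, jacobiTheta₂_term]
  ring_nf

lemma summable_norm_mul_eC_intCast_sq {a : ℤ → ℂ} {C : ℝ} (ha : ∀ n, ‖a n‖ ≤ C)
    {w : ℂ} (hw : 0 < w.im) :
    Summable fun n : ℤ => ‖a n * eC ((n : ℂ) ^ 2 * w)‖ := by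
  have hθ : Summable fun n : ℤ => ‖eC ((n : ℂ) ^ 2 * w)‖ := by
    simp only [eC_intCast_sq_mul]
    exact summable_norm_iff.mpr ((summable_jacobiTheta₂_term_iff 0 (2 * w)).mpr (by simpa))
  refine (hθ.mul_left C).of_nonneg_of_le (fun _ => norm_nonneg _) fun n => ?_
  rw [norm_mul]
  exact mul_le_mul_of_nonneg_right (ha n) (norm_nonneg _)

/-- For `q = 0` both sides vanish, since `μ 0 = 0`. -/
lemma ramanujanSum_eq_sum_divisors_ite (q : ℕ) (n : ℤ) :
    ramanujanSum q n = ∑ d ∈ q.divisors, if (d : ℤ) ∣ n then (μ (q / d) : ℤ) * d else 0 := by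
  rcases q.eq_zero_or_pos with rfl | hq
  · simp [ramanujanSum]
  have hdiv : (q.gcd n.natAbs).divisors = q.divisors.filter fun d : ℕ => (d : ℤ) ∣ n := by
    ext d
    simp [Nat.dvd_gcd_iff, Int.natCast_dvd, hq.ne', Nat.gcd_pos_of_pos_left _ hq |>.ne']
  rw [ramanujanSum, hdiv, Finset.sum_filter]

lemma abs_ramanujanSum_le (q : ℕ) (n : ℤ) : |ramanujanSum q n| ≤ σ 1 q := by
  rw [ramanujanSum_eq_sum_divisors_ite, sigma_one_apply, Nat.cast_sum]
  refine (Finset.abs_sum_le_sum_abs _ _).trans (Finset.sum_le_sum fun d _ => ?_)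
  split_ifs
  · rw [abs_mul, Nat.abs_cast]
    exact mul_le_of_le_one_left d.cast_nonneg abs_moebius_le_one
  · simp

lemma ramanujanSum_mul_eq_sum_divisors (q : ℕ) (n : ℤ) (x : ℂ) :
    (ramanujanSum q n : ℂ) * x =
      ∑ d ∈ q.divisors, ((μ (q / d) : ℤ) : ℂ) * d * if (d : ℤ) ∣ n then x else 0 := by
  rw [ramanujanSum_eq_sum_divisors_ite, Int.cast_sum, Finset.sum_mul]
  refine Finset.sum_congr rfl fun d _ => ?_
  split_ifs <;> push_cast <;> ring

lemma norm_dirichletCharacter_mul_ramanujanSum_le {N : ℕ} (ψ : DirichletCharacter ℂ N) (q : ℕ)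
    (n : ℤ) : ‖ψ n * (ramanujanSum q n : ℂ)‖ ≤ σ 1 q := by
  rw [norm_mul, norm_intCast, ← one_mul (σ 1 q : ℝ)]
  exact mul_le_mul (ψ.norm_le_one _) (mod_cast abs_ramanujanSum_le q n) (abs_nonneg _) zero_le_one

lemma tsum_ite_dvd {α : Type*} [AddCommMonoid α] [TopologicalSpace α] (f : ℤ → α) {d : ℤ}
    (hd : d ≠ 0) : ∑' n, (if d ∣ n then f n else 0) = ∑' m, f (d * m) := by
  have hsupp : (Function.support fun n => if d ∣ n then f n else 0) ⊆ Set.range (d * ·) := by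
    intro n hn
    by_contra h
    exact hn (if_neg fun ⟨m, hm⟩ => h ⟨m, hm.symm⟩)
  rw [← (mul_right_injective₀ hd).tsum_eq hsupp]
  simp

lemma tsum_ite_dvd_mul_eC_eq_thetaPsi {N : ℕ} (ψ : DirichletCharacter ℂ N) {d : ℕ} (hd : d ≠ 0)
    (z : ℂ) :
    ∑' n : ℤ, (if (d : ℤ) ∣ n then ψ n * eC ((n : ℂ) ^ 2 * z) else 0) =
      ψ d * thetaPsi ψ ((d : ℂ) ^ 2 * z) := by
  rw [tsum_ite_dvd _ (by exact_mod_cast hd), thetaPsi, ← tsum_mul_left]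
  congr 1 with m
  push_cast
  rw [map_mul]
  ring_nf

theorem theta_twist_ramanujan_general
    (N : ℕ) (ψ : DirichletCharacter ℂ N) (q : ℕ)
    (z : ℂ) (hz : 0 < z.im) :
    (Summable fun n : ℤ =>
        ‖ψ ((n : ZMod N)) * (ramanujanSum q n : ℂ) * eC ((n : ℂ) ^ 2 * z)‖) ∧
      (∀ j ∈ q.divisors, Summable fun n : ℤ =>
        ‖ψ ((n : ZMod N)) * eC ((n : ℂ) ^ 2 * ((j : ℂ) ^ 2 * z))‖) ∧
      (∑' n : ℤ, ψ ((n : ZMod N)) * (ramanujanSum q n : ℂ) * eC ((n : ℂ) ^ 2 * z)) =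
        ∑ j ∈ q.divisors, ((μ (q / j) : ℤ) : ℂ) * (j : ℂ) * ψ ((j : ZMod N)) *
          thetaPsi ψ ((j : ℂ) ^ 2 * z) := by
  have hψ (n : ℤ) : ‖ψ n‖ ≤ 1 := ψ.norm_le_one _
  have hjz {j : ℕ} (hj : j ∈ q.divisors) : 0 < ((j : ℂ) ^ 2 * z).im := by
    rw [← ofReal_natCast, ← ofReal_pow, im_ofReal_mul]
    exact mul_pos (by exact_mod_cast pow_pos (Nat.pos_of_mem_divisors hj) 2) hz
  refine ⟨summable_norm_mul_eC_intCast_sq (norm_dirichletCharacter_mul_ramanujanSum_le ψ q) hz,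
    fun j hj => summable_norm_mul_eC_intCast_sq hψ (hjz hj), ?_⟩
  have hsummable (d : ℕ) :
      Summable fun n : ℤ => if (d : ℤ) ∣ n then ψ n * eC ((n : ℂ) ^ 2 * z) else 0 := by
    refine .of_norm_bounded (summable_norm_mul_eC_intCast_sq hψ hz) fun n => ?_
    split_ifs
    · exact le_rfl
    · rw [norm_zero]; positivity
  have hexpand (n : ℤ) : ψ n * (ramanujanSum q n : ℂ) * eC ((n : ℂ) ^ 2 * z) =
      ∑ d ∈ q.divisors, ((μ (q / d) : ℤ) : ℂ) * d *
        if (d : ℤ) ∣ n then ψ n * eC ((n : ℂ) ^ 2 * z) else 0 := by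
    rw [← ramanujanSum_mul_eq_sum_divisors]
    ring
  rw [tsum_congr hexpand, Summable.tsum_finsetSum fun d _ => (hsummable d).mul_left _]
  refine Finset.sum_congr rfl fun d hd => ?_
  rw [tsum_mul_left, tsum_ite_dvd_mul_eC_eq_thetaPsi ψ (Nat.pos_of_mem_divisors hd).ne']
  ring

theorem theta_twist_ramanujan
    (N : ℕ) (ψ : DirichletCharacter ℂ N) (q : ℕ) (hq : 0 < q)
    (z : ℂ) (hz : 0 < z.im) :
    (Summable fun n : ℤ =>
        ‖ψ ((n : ZMod N)) * (ramanujanSum q n : ℂ) * eC ((n : ℂ) ^ 2 * z)‖) ∧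
      (∀ j ∈ q.divisors, Summable fun n : ℤ =>
        ‖ψ ((n : ZMod N)) * eC ((n : ℂ) ^ 2 * ((j : ℂ) ^ 2 * z))‖) ∧
      (∑' n : ℤ, ψ ((n : ZMod N)) * (ramanujanSum q n : ℂ) * eC ((n : ℂ) ^ 2 * z)) =
        ∑ j ∈ q.divisors, ((μ (q / j) : ℤ) : ℂ) * (j : ℂ) * ψ ((j : ZMod N)) *
          thetaPsi ψ ((j : ℂ) ^ 2 * z) :=
  theta_twist_ramanujan_general N ψ q z hz
end
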